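/- Let A, B, A', B' be finite types. If σ₀ ∈ PPT_2(A:B) and σ₁ ∈ PPT_2(A':B'), then the Kronecker product σ₀ ⊗ σ₁, viewed as a matrix on the bipartite system with first party AA' and second party BB', belongs to PPT_2(AA':BB'). Here the partial transpose on the product system is taken simultaneously over both B and B'. -/

import Mathlib

/-!
The witness for `σ₀ ⊗ σ₁` is `ω₀ ⊗ ω₁`. Partial transposes and trace norms are multiplicative
under `⊗`, and `ω₀ ⊗ ω₁ ± X ⊗ Y = ½ ((ω₀ + X) ⊗ (ω₁ ± Y) + (ω₀ - X) ⊗ (ω₁ ∓ Y))` is a sum of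
Kronecker products of positive semidefinite matrices.
-/

open Matrix
open scoped ComplexOrder

/-- Total positive semidefinite square root: the PSD square root of `M` if `M` is PSD,
and junk value `0` otherwise. -/
noncomputable def msqrt {n : Type*} [Fintype n] [DecidableEq n]
    (M : Matrix n n ℂ) : Matrix n n ℂ :=
  letI := Classical.dec M.PosSemidef
  if h : M.PosSemidef then (h.1.eigenvectorUnitary.1 * diagonal ((↑) ∘ Real.sqrt ∘ h.1.eigenvalues) *
    (star h.1.eigenvectorUnitary : Matrix n n ℂ)) else 0

/-- The trace norm `‖M‖₁ = tr √(Mᴴ M)` of a complex matrix, as a real number. -/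
noncomputable def traceNorm {n : Type*} [Fintype n] [DecidableEq n]
    (M : Matrix n n ℂ) : ℝ :=
  (msqrt (Mᴴ * M)).trace.re

/-- The partial transpose over the second party `B`:
`M^{T_B}((a,b),(a',b')) = M((a,b'),(a',b))`. -/
def ptB {A B : Type*} (M : Matrix (A × B) (A × B) ℂ) : Matrix (A × B) (A × B) ℂ :=
  fun x y => M (x.1, y.2) (y.1, x.2)

/-- Uhlmann fidelity `F(ρ,σ) = (tr √(√σ ρ √σ))²` between positive semidefinite matrices. -/
noncomputable def fidelity {n : Type*} [Fintype n] [DecidableEq n]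
    (ρ σ : Matrix n n ℂ) : ℝ :=
  ((msqrt (msqrt σ * ρ * msqrt σ)).trace.re) ^ 2

/-- The set `PPT₂(A:B)`: positive semidefinite `σ` such that there exists `ω` with
`−ω ⪯ σ^{T_B} ⪯ ω` and `‖ω^{T_B}‖₁ ≤ 1`. -/
def PPT2set {A B : Type*} [Fintype A] [Fintype B] [DecidableEq A] [DecidableEq B] :
    Set (Matrix (A × B) (A × B) ℂ) :=
  {σ | σ.PosSemidef ∧ ∃ ω : Matrix (A × B) (A × B) ℂ,
    (ω - ptB σ).PosSemidef ∧ (ω + ptB σ).PosSemidef ∧ traceNorm (ptB ω) ≤ 1}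

/-- Partial transpose over the combined second party `BB'` for a matrix on
`(A × B) × (A' × B')`:
`N^{T_{BB'}}(((a,b),(a',b')),((c,d),(c',d'))) = N(((a,d),(a',d')),((c,b),(c',b')))`. -/
def ptBB {A B A' B' : Type*}
    (N : Matrix ((A × B) × (A' × B')) ((A × B) × (A' × B')) ℂ) :
    Matrix ((A × B) × (A' × B')) ((A × B) × (A' × B')) ℂ :=
  fun x y => N ((x.1.1, y.1.2), (x.2.1, y.2.2)) ((y.1.1, x.1.2), (y.2.1, x.2.2))

/-- The set `PPT₂(AA':BB')` on the bipartite system with first party `A × A'` and second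
party `B × B'`, with the partial transpose taken simultaneously over `B` and `B'`. -/
def PPT2setProd {A B A' B' : Type*}
    [Fintype A] [Fintype B] [Fintype A'] [Fintype B']
    [DecidableEq A] [DecidableEq B] [DecidableEq A'] [DecidableEq B'] :
    Set (Matrix ((A × B) × (A' × B')) ((A × B) × (A' × B')) ℂ) :=
  {σ | σ.PosSemidef ∧ ∃ ω : Matrix ((A × B) × (A' × B')) ((A × B) × (A' × B')) ℂ,
    (ω - ptBB σ).PosSemidef ∧ (ω + ptBB σ).PosSemidef ∧ traceNorm (ptBB ω) ≤ 1}

open scoped Kronecker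

section TraceNorm

open scoped MatrixOrder

variable {m n : Type*} [Fintype m] [Fintype n] [DecidableEq m] [DecidableEq n]

lemma msqrt_eq_cfcSqrt {M : Matrix n n ℂ} (hM : M.PosSemidef) : msqrt M = CFC.sqrt M := by
  rw [msqrt, dif_pos hM, CFC.sqrt_eq_real_sqrt M hM.nonneg,
    cfcₙ_eq_cfc (hf0 := Real.sqrt_zero), hM.1.cfc_eq, IsHermitian.cfc,
    Unitary.conjStarAlgAut_apply]
  rfl

lemma posSemidef_msqrt (M : Matrix n n ℂ) : (msqrt M).PosSemidef := by
  by_cases hM : M.PosSemidef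
  · rw [msqrt_eq_cfcSqrt hM]
    exact (CFC.sqrt_nonneg M).posSemidef
  · rw [msqrt, dif_neg hM]
    exact .zero

lemma msqrt_kronecker {P : Matrix m m ℂ} {Q : Matrix n n ℂ}
    (hP : P.PosSemidef) (hQ : Q.PosSemidef) : msqrt (P ⊗ₖ Q) = msqrt P ⊗ₖ msqrt Q := by
  have hsqrt := (posSemidef_msqrt P).kronecker (posSemidef_msqrt Q)
  rw [msqrt_eq_cfcSqrt (hP.kronecker hQ)]
  refine (CFC.sqrt_eq_iff _ _ (hP.kronecker hQ).nonneg hsqrt.nonneg).mpr ?_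
  rw [← mul_kronecker_mul, msqrt_eq_cfcSqrt hP, msqrt_eq_cfcSqrt hQ,
    CFC.sqrt_mul_sqrt_self P hP.nonneg, CFC.sqrt_mul_sqrt_self Q hQ.nonneg]

lemma traceNorm_eq_trace (M : Matrix n n ℂ) : (traceNorm M : ℂ) = (msqrt (Mᴴ * M)).trace :=
  Complex.ext rfl (Complex.nonneg_iff.mp (posSemidef_msqrt _).trace_nonneg).2

lemma traceNorm_nonneg (M : Matrix n n ℂ) : 0 ≤ traceNorm M :=
  (Complex.nonneg_iff.mp (posSemidef_msqrt _).trace_nonneg).1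

lemma traceNorm_kronecker (M : Matrix m m ℂ) (N : Matrix n n ℂ) :
    traceNorm (M ⊗ₖ N) = traceNorm M * traceNorm N := by
  apply Complex.ofReal_injective
  rw [Complex.ofReal_mul, traceNorm_eq_trace, traceNorm_eq_trace, traceNorm_eq_trace,
    conjTranspose_kronecker, ← mul_kronecker_mul,
    msqrt_kronecker (posSemidef_conjTranspose_mul_self M) (posSemidef_conjTranspose_mul_self N),
    trace_kronecker]

end TraceNorm

section Kronecker

variable {𝕜 m n : Type*} [RCLike 𝕜] [Fintype m] [Fintype n]

lemma Matrix.PosSemidef.kronecker_add_kronecker {ω X : Matrix m m 𝕜} {ω' Y : Matrix n n 𝕜}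
    (h₁ : (ω - X).PosSemidef) (h₂ : (ω + X).PosSemidef)
    (h₃ : (ω' - Y).PosSemidef) (h₄ : (ω' + Y).PosSemidef) :
    (ω ⊗ₖ ω' + X ⊗ₖ Y).PosSemidef := by
  have hsum : ω ⊗ₖ ω' + X ⊗ₖ Y =
      (2⁻¹ : ℝ) • ((ω + X) ⊗ₖ (ω' + Y) + (ω - X) ⊗ₖ (ω' - Y)) := by
    ext
    simp only [add_apply, sub_apply, smul_apply, kroneckerMap_apply, RCLike.real_smul_eq_coe_mul]
    push_cast
    ring
  rw [hsum]
  exact ((h₂.kronecker h₄).add (h₁.kronecker h₃)).smul (by norm_num)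

lemma Matrix.PosSemidef.kronecker_sub_kronecker {ω X : Matrix m m 𝕜} {ω' Y : Matrix n n 𝕜}
    (h₁ : (ω - X).PosSemidef) (h₂ : (ω + X).PosSemidef)
    (h₃ : (ω' - Y).PosSemidef) (h₄ : (ω' + Y).PosSemidef) :
    (ω ⊗ₖ ω' - X ⊗ₖ Y).PosSemidef := by
  have := PosSemidef.kronecker_add_kronecker h₁ h₂ (Y := -Y)
    (by rwa [sub_neg_eq_add]) (by rwa [← sub_eq_add_neg])
  rwa [show X ⊗ₖ (-Y) = -(X ⊗ₖ Y) by ext; simp, ← sub_eq_add_neg] at this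

lemma ptBB_kronecker {A B A' B' : Type*} (M : Matrix (A × B) (A × B) ℂ)
    (N : Matrix (A' × B') (A' × B') ℂ) : ptBB (M ⊗ₖ N) = ptB M ⊗ₖ ptB N :=
  rfl

end Kronecker

open scoped Kronecker in
theorem PPT2_kron {A B A' B' : Type*}
    [Fintype A] [Fintype B] [Fintype A'] [Fintype B']
    [DecidableEq A] [DecidableEq B] [DecidableEq A'] [DecidableEq B']
    (σ₀ : Matrix (A × B) (A × B) ℂ) (σ₁ : Matrix (A' × B') (A' × B') ℂ)
    (h₀ : σ₀ ∈ PPT2set (A := A) (B := B))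
    (h₁ : σ₁ ∈ PPT2set (A := A') (B := B')) :
    σ₀ ⊗ₖ σ₁ ∈ PPT2setProd (A := A) (B := B) (A' := A') (B' := B') := by
  obtain ⟨hσ₀, ω₀, h₀m, h₀p, h₀n⟩ := h₀
  obtain ⟨hσ₁, ω₁, h₁m, h₁p, h₁n⟩ := h₁
  refine ⟨hσ₀.kronecker hσ₁, ω₀ ⊗ₖ ω₁, ?_, ?_, ?_⟩
  · rw [ptBB_kronecker]
    exact .kronecker_sub_kronecker h₀m h₀p h₁m h₁p
  · rw [ptBB_kronecker]
    exact .kronecker_add_kronecker h₀m h₀p h₁m h₁p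
  · rw [ptBB_kronecker, traceNorm_kronecker]
    exact mul_le_one₀ h₀n (traceNorm_nonneg _) h₁n
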